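/- If in the MM-BAF there exists a model M_i that is weakly preferred to all models (M_i ⪰ M_j for all j), then there exists an s-preferred extension containing M_i. -/

import Mathlib

/-- Set-attack in a bipolar argumentation framework: direct, indirect
(attack followed by a nonempty chain of supports), or supported
(nonempty chain of supports followed by an attack). -/
def SetAttacks {α : Type*} (att sup : α → α → Prop) (T : Set α) (a : α) : Prop :=
  ∃ b ∈ T, att b a ∨ (∃ c, att b c ∧ Relation.TransGen sup c a) ∨
    (∃ c, Relation.TransGen sup b c ∧ att c a)

def SetSupports {α : Type*} (sup : α → α → Prop) (T : Set α) (a : α) : Prop :=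
  ∃ b ∈ T, sup b a

def ConflictFree {α : Type*} (att sup : α → α → Prop) (T : Set α) : Prop :=
  ∀ a ∈ T, ¬ SetAttacks att sup T a

def Safe {α : Type*} (att sup : α → α → Prop) (T : Set α) : Prop :=
  ¬ ∃ a, SetAttacks att sup T a ∧ (SetSupports sup T a ∨ a ∈ T)

def Defends {α : Type*} (att sup : α → α → Prop) (T : Set α) (a : α) : Prop :=
  ∀ b, SetAttacks att sup {b} a → ∃ c ∈ T, SetAttacks att sup {c} b

def DAdmissible {α : Type*} (att sup : α → α → Prop) (T : Set α) : Prop :=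
  ConflictFree att sup T ∧ ∀ a ∈ T, Defends att sup T a

def SAdmissible {α : Type*} (att sup : α → α → Prop) (T : Set α) : Prop :=
  Safe att sup T ∧ ∀ a ∈ T, Defends att sup T a

def CAdmissible {α : Type*} (att sup : α → α → Prop) (T : Set α) : Prop :=
  ConflictFree att sup T ∧ (∀ a ∈ T, ∀ b, sup a b → b ∈ T) ∧ ∀ a ∈ T, Defends att sup T a

def DPreferred {α : Type*} (att sup : α → α → Prop) (T : Set α) : Prop :=
  DAdmissible att sup T ∧ ∀ U, DAdmissible att sup U → T ⊆ U → U = T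

def SPreferred {α : Type*} (att sup : α → α → Prop) (T : Set α) : Prop :=
  SAdmissible att sup T ∧ ∀ U, SAdmissible att sup U → T ⊆ U → U = T

def CPreferred {α : Type*} (att sup : α → α → Prop) (T : Set α) : Prop :=
  CAdmissible att sup T ∧ ∀ U, CAdmissible att sup U → T ⊆ U → U = T

def Stable {α : Type*} (att sup : α → α → Prop) (T : Set α) : Prop :=
  ConflictFree att sup T ∧ ∀ a, a ∉ T → SetAttacks att sup T a

/-- Attack relation of the BAF corresponding to an MM instance.
Sum.inl i is the argument for model M_i, Sum.inr i the one for CE c_i.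
ge i j means M_i ⪰ M_j. -/
def mmAtt {X ι : Type*} (Mod : ι → X → Bool) (c : ι → X) (x : X)
    (ge : ι → ι → Prop) : ι ⊕ ι → ι ⊕ ι → Prop
  | Sum.inl i, Sum.inl j => Mod i x ≠ Mod j x ∧ ge i j
  | Sum.inl i, Sum.inr j => Mod i (c j) = Mod i x ∧ ge i j
  | Sum.inr j, Sum.inl i => Mod i (c j) = Mod i x ∧ ge j i
  | Sum.inr _, Sum.inr _ => False

/-- Support relation of the MM-BAF: mutual supports between M_i and c_i. -/
def mmSup {ι : Type*} : ι ⊕ ι → ι ⊕ ι → Prop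
  | Sum.inl i, Sum.inr j => i = j
  | Sum.inr i, Sum.inl j => i = j
  | _, _ => False

/-! Since `M_i` is weakly preferred to every model, each attack on `M_i` or on `c_i` is
reciprocated, so `{M_i}` counterattacks every set-attacker of `M_i`. It is safe because no
argument of the pair `{M_i, c_i}` attacks one of the same pair, which is where
`M_k(c_k) ≠ M_k(x)` enters. Unions of chains of s-admissible sets are s-admissible, so Zorn's
lemma extends `{M_i}` to an s-preferred extension. -/

open Relation

section BipolarFramework

variable {α β : Type*} {att sup : α → α → Prop}

theorem apply_eq_of_reflTransGen {f : α → β} (hf : ∀ a b, sup a b → f a = f b) {a b : α}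
    (h : ReflTransGen sup a b) : f a = f b := by
  induction h with
  | refl => rfl
  | tail _ hbc ih => exact ih.trans (hf _ _ hbc)

theorem setAttacks_sUnion {C : Set (Set α)} {a : α} :
    SetAttacks att sup (⋃₀ C) a ↔ ∃ T ∈ C, SetAttacks att sup T a := by
  simp only [SetAttacks, Set.mem_sUnion]
  grind

theorem SetAttacks.mono {S T : Set α} {a : α} (h : SetAttacks att sup S a) (hST : S ⊆ T) :
    SetAttacks att sup T a :=
  let ⟨b, hb, hba⟩ := h
  ⟨b, hST hb, hba⟩

theorem SetSupports.mono {S T : Set α} {a : α} (h : SetSupports sup S a) (hST : S ⊆ T) :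
    SetSupports sup T a :=
  let ⟨b, hb, hba⟩ := h
  ⟨b, hST hb, hba⟩

theorem Defends.mono {S T : Set α} {a : α} (h : Defends att sup S a) (hST : S ⊆ T) :
    Defends att sup T a := fun b hb =>
  let ⟨c, hc, hcb⟩ := h b hb
  ⟨c, hST hc, hcb⟩

theorem safe_sUnion_of_isChain {C : Set (Set α)} (hC : ∀ T ∈ C, Safe att sup T)
    (hchain : IsChain (· ⊆ ·) C) : Safe att sup (⋃₀ C) := by
  rintro ⟨a, hatt, hsup⟩
  obtain ⟨T₁, hT₁, hatt⟩ := setAttacks_sUnion.mp hatt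
  obtain ⟨T₂, hT₂, hsup⟩ : ∃ T ∈ C, SetSupports sup T a ∨ a ∈ T := by
    rcases hsup with ⟨b, ⟨T, hT, hb⟩, hba⟩ | ⟨T, hT, ha⟩
    exacts [⟨T, hT, .inl ⟨b, hb, hba⟩⟩, ⟨T, hT, .inr ha⟩]
  rcases hchain.total hT₁ hT₂ with h | h
  · exact hC T₂ hT₂ ⟨a, hatt.mono h, hsup⟩
  · exact hC T₁ hT₁ ⟨a, hatt, hsup.imp (·.mono h) (@h a)⟩

theorem sAdmissible_sUnion_of_isChain {C : Set (Set α)} (hC : ∀ T ∈ C, SAdmissible att sup T)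
    (hchain : IsChain (· ⊆ ·) C) : SAdmissible att sup (⋃₀ C) := by
  refine ⟨safe_sUnion_of_isChain (fun T hT => (hC T hT).1) hchain, ?_⟩
  rintro a ⟨T, hT, ha⟩
  exact ((hC T hT).2 a ha).mono (Set.subset_sUnion_of_mem hT)

theorem SAdmissible.exists_sPreferred_superset {T : Set α} (hT : SAdmissible att sup T) :
    ∃ P, SPreferred att sup P ∧ T ⊆ P := by
  obtain ⟨P, hTP, hP⟩ := zorn_subset_nonempty {U | SAdmissible att sup U}
    (fun C hC hchain _ => ⟨⋃₀ C, sAdmissible_sUnion_of_isChain hC hchain,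
      fun _ => Set.subset_sUnion_of_mem⟩) T hT
  exact ⟨P, ⟨hP.prop, fun U hU hPU => (hP.eq_of_subset hU hPU).symm⟩, hTP⟩

/-- Every attack charged to `T` runs inside the fiber containing `T`. -/
theorem safe_of_mapsTo_singleton {f : α → β} (hsup : ∀ a b, sup a b → f a = f b)
    (hatt : ∀ a b, att a b → f a ≠ f b) {T : Set α} {k : β} (hT : Set.MapsTo f T {k}) :
    Safe att sup T := by
  rintro ⟨a, ⟨b, hb, hba⟩, ha⟩
  have hfa : f a = k := by
    rcases ha with ⟨b', hb', hs⟩ | ha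
    exacts [(hsup _ _ hs).symm.trans (hT hb'), hT ha]
  have hfb : f b = f a := (hT hb).trans hfa.symm
  rcases hba with h | ⟨c, hbc, hca⟩ | ⟨c, hbc, hca⟩
  · exact hatt _ _ h hfb
  · exact hatt _ _ hbc (hfb.trans (apply_eq_of_reflTransGen hsup hca.to_reflTransGen).symm)
  · exact hatt _ _ hca ((apply_eq_of_reflTransGen hsup hbc.to_reflTransGen).symm.trans hfb)

theorem setAttacks_singleton_symm [Std.Symm sup] {a b : α}
    (hrev : ∀ c d, ReflTransGen sup a d → att c d → att d c)
    (h : SetAttacks att sup {b} a) : SetAttacks att sup {a} b := by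
  obtain ⟨b, rfl, h⟩ := h
  refine ⟨a, rfl, ?_⟩
  rcases h with h | ⟨c, hbc, hca⟩ | ⟨c, hbc, hca⟩
  · exact .inl (hrev _ _ .refl h)
  · exact .inr (.inr ⟨c, symm hca, hrev _ _ (symm hca).to_reflTransGen hbc⟩)
  · exact .inr (.inl ⟨c, hrev _ _ .refl hca, symm hbc⟩)

theorem sAdmissible_singleton_of_symm [Std.Symm sup] {a : α} (hsafe : Safe att sup {a})
    (hrev : ∀ c d, ReflTransGen sup a d → att c d → att d c) : SAdmissible att sup {a} := by
  refine ⟨hsafe, ?_⟩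
  rintro d rfl b hb
  exact ⟨d, rfl, setAttacks_singleton_symm hrev hb⟩

end BipolarFramework

section ModelMultiplicity

variable {X ι : Type*} {Mod : ι → X → Bool} {c : ι → X} {x : X} {ge : ι → ι → Prop}

instance : Std.Symm (mmSup (ι := ι)) where
  symm a b h := by cases a <;> cases b <;> simp_all [mmSup]

theorem mmSup_elim_eq {a b : ι ⊕ ι} (h : mmSup a b) : Sum.elim id id a = Sum.elim id id b := by
  cases a <;> cases b <;> simp_all [mmSup]

theorem mmAtt_elim_ne (hval : ∀ k, Mod k (c k) ≠ Mod k x) {a b : ι ⊕ ι}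
    (h : mmAtt Mod c x ge a b) : Sum.elim id id a ≠ Sum.elim id id b := by
  rintro hab
  rcases a with j | j <;> rcases b with k | k <;>
    simp only [Sum.elim_inl, Sum.elim_inr, id] at hab <;> subst hab <;> simp only [mmAtt] at h
  exacts [h.1 rfl, hval j h.1, hval j h.1]

theorem mmAtt_swap_of_dominant {i : ι} (hdom : ∀ j, ge i j) {a b : ι ⊕ ι}
    (hb : Sum.elim id id b = i) (h : mmAtt Mod c x ge a b) : mmAtt Mod c x ge b a := by
  rcases a with j | j <;> rcases b with k | k <;>
    simp only [Sum.elim_inl, Sum.elim_inr, id] at hb <;> subst hb <;> simp only [mmAtt] at h ⊢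
  exacts [⟨Ne.symm h.1, hdom j⟩, ⟨h.1, hdom j⟩, ⟨h.1, hdom j⟩]

end ModelMultiplicity

theorem weakly_dominant_model_in_some_sPreferred_general {X ι : Type*}
    (Mod : ι → X → Bool) (c : ι → X) (x : X) (ge : ι → ι → Prop)
    (hval : ∀ k, Mod k (c k) ≠ Mod k x)
    (i : ι) (hdom : ∀ j, ge i j) :
    ∃ P : Set (ι ⊕ ι), SPreferred (mmAtt Mod c x ge) mmSup P ∧ Sum.inl i ∈ P := by
  have hsafe : Safe (mmAtt Mod c x ge) mmSup {Sum.inl i} :=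
    safe_of_mapsTo_singleton (fun _ _ => mmSup_elim_eq) (fun _ _ => mmAtt_elim_ne hval)
      (fun _ ha => congrArg (Sum.elim id id) ha)
  have hadm : SAdmissible (mmAtt Mod c x ge) mmSup {Sum.inl i} :=
    sAdmissible_singleton_of_symm hsafe fun _ _ hd =>
      mmAtt_swap_of_dominant hdom (apply_eq_of_reflTransGen (fun _ _ => mmSup_elim_eq) hd).symm
  obtain ⟨P, hP, hiP⟩ := hadm.exists_sPreferred_superset
  exact ⟨P, hP, hiP rfl⟩

/-- If a model M_i is weakly preferred to all models, then some s-preferred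
extension of the MM-BAF contains M_i. -/
theorem weakly_dominant_model_in_some_sPreferred {X ι : Type*} [Fintype ι]
    (Mod : ι → X → Bool) (c : ι → X) (x : X) (ge : ι → ι → Prop)
    (hval : ∀ k, Mod k (c k) ≠ Mod k x)
    (hrefl : ∀ k, ge k k) (htrans : ∀ k l m, ge k l → ge l m → ge k m)
    (htot : ∀ k l, ge k l ∨ ge l k)
    (i : ι) (hdom : ∀ j, ge i j) :
    ∃ P : Set (ι ⊕ ι), SPreferred (mmAtt Mod c x ge) mmSup P ∧ Sum.inl i ∈ P :=
  weakly_dominant_model_in_some_sPreferred_general Mod c x ge hval i hdom
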